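/- Let λ ∈ ]0,n−1[ and let Ω be a bounded open Lipschitz subset of ℝ^n with cl Ω ⊆ Q. Let h ∈ A^1_{q,λ}. Let φ be the restriction to cl Q \ Ω of a q-periodic function of class C^1 on cl S[Ω]^−, where S[Ω]^− ≡ ℝ^n \ cl(⋃_{z∈ℤ^n}(qz+Ω)). Then ∫_{∂Q} h(x−y) φ(y) (ν_Q)_j(y) dσ_y = 0 for all x ∈ ℝ^n and all j ∈ {1,…,n}. -/

import Mathlib

/-!
The opposite faces `{y j = 0}` and `{y j = q j}` of `∂Q` differ by the translation `q j • e j`,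
and `y ↦ h (x - y) * φ y` is invariant under it at almost every face point. For `φ`: the face
`{y j = 0}` lies in `S[Ω]⁻`, because `cl Ω` is a compact subset of `Q`, so every periodic copy
of `Ω` stays a fixed distance away from the hyperplane. For `h`: it is periodic off the lattice,
and since `n ≥ 2`, `x - y` meets the lattice only on a null set of the face. Hence the two face
integrals cancel.
-/

open MeasureTheory Set Pointwise Filter

noncomputable section

abbrev Euc (n : ℕ) := EuclideanSpace ℝ (Fin n)

variable {n : ℕ}

/-- The lattice `qℤⁿ`. -/
def qLat (q : Fin n → ℝ) : Set (Euc n) :=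
  {x | ∃ z : Fin n → ℤ, ∀ i, x i = q i * z i}

/-- The fundamental cell `Q = ∏ ]0, qᵢ[`. -/
def cellQ (q : Fin n → ℝ) : Set (Euc n) := {x | ∀ i, x i ∈ Set.Ioo 0 (q i)}

/-- `Q̃ = ∏ ]-qᵢ/2, qᵢ/2[`. -/
def cellQt (q : Fin n → ℝ) : Set (Euc n) := {x | ∀ i, x i ∈ Set.Ioo (-(q i) / 2) (q i / 2)}

/-- `u` is `q`-periodic on `S`. -/
def qPerOn (q : Fin n → ℝ) (S : Set (Euc n)) (u : Euc n → ℝ) : Prop :=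
  ∀ x ∈ S, ∀ j : Fin n, u (x + EuclideanSpace.single j (q j)) = u x

/-- membership in `A⁰_{q,λ}` -/
def memA0 (q : Fin n → ℝ) (lam : ℝ) (h : Euc n → ℝ) : Prop :=
  ContinuousOn h (qLat q)ᶜ ∧ qPerOn q (qLat q)ᶜ h ∧
    ∃ M : ℝ, ∀ x ∈ cellQt q \ {0}, |h x| * ‖x‖ ^ lam ≤ M

/-- the norm of `A⁰_{q,λ}` -/
def a0Norm (q : Fin n → ℝ) (lam : ℝ) (h : Euc n → ℝ) : ℝ :=
  sSup ((fun x : Euc n => |h x| * ‖x‖ ^ lam) '' (cellQt q \ {0}))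

/-- partial derivative in the `j`-th coordinate direction -/
def pd (j : Fin n) (u : Euc n → ℝ) : Euc n → ℝ :=
  fun x => fderiv ℝ u x (EuclideanSpace.single j 1)

/-- membership in `A¹_{q,λ}` -/
def memA1 (q : Fin n → ℝ) (lam : ℝ) (h : Euc n → ℝ) : Prop :=
  ContDiffOn ℝ 1 h (qLat q)ᶜ ∧ memA0 q lam h ∧ ∀ j : Fin n, memA0 q (lam + 1) (pd j h)

/-- the norm of `A¹_{q,λ}` -/
def a1Norm (q : Fin n → ℝ) (lam : ℝ) (h : Euc n → ℝ) : ℝ :=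
  a0Norm q lam h + ∑ j : Fin n, a0Norm q (lam + 1) (pd j h)

/-- the periodic volume potential `P⁺[h,φ]` -/
def Pplus (Ω : Set (Euc n)) (h φ : Euc n → ℝ) : Euc n → ℝ :=
  fun x => ∫ y in Ω, h (x - y) * φ y

/-- the periodic volume potential `P⁻[h,φ]` -/
def Pminus (q : Fin n → ℝ) (Ω : Set (Euc n)) (h φ : Euc n → ℝ) : Euc n → ℝ :=
  fun x => ∫ y in cellQ q \ closure Ω, h (x - y) * φ y

/-- the periodic union `S[Ω] = ⋃_z (qz + Ω)` -/
def Sper (q : Fin n → ℝ) (Ω : Set (Euc n)) : Set (Euc n) :=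
  ⋃ z : Fin n → ℤ, ((show Euc n from WithLp.toLp 2 (fun i => q i * z i)) +ᵥ Ω)

/-- `S[Ω]⁻ = ℝⁿ \ cl S[Ω]` -/
def SperM (q : Fin n → ℝ) (Ω : Set (Euc n)) : Set (Euc n) :=
  (closure (Sper q Ω))ᶜ

/-- the multi-index partial derivative `D^β u` -/
def mderiv (β : Fin n → ℕ) (u : Euc n → ℝ) : Euc n → ℝ :=
  (List.finRange n).foldr (fun j v => (pd j)^[β j] v) u

/-- Roumieu-type bound `ρ^{|β|}/|β|! · |D^β u| ≤ M` on `W` -/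
def rouBound (ρ : ℝ) (W : Set (Euc n)) (u : Euc n → ℝ) (M : ℝ) : Prop :=
  ∀ β : Fin n → ℕ, ∀ x ∈ W,
    ρ ^ (∑ j, β j) / (Nat.factorial (∑ j, β j) : ℝ) * |mderiv β u x| ≤ M

/-- the Roumieu norm on `W` -/
def rouNorm (ρ : ℝ) (W : Set (Euc n)) (u : Euc n → ℝ) : ℝ :=
  sSup ((fun p : (Fin n → ℕ) × Euc n =>
    ρ ^ (∑ j, p.1 j) / (Nat.factorial (∑ j, p.1 j) : ℝ) * |mderiv p.1 u p.2|) ''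
    {p : (Fin n → ℕ) × Euc n | p.2 ∈ W})

/-- membership in the Roumieu class `C⁰_{ω,ρ}(cl V)` -/
def memRou (ρ : ℝ) (V : Set (Euc n)) (u : Euc n → ℝ) : Prop :=
  ContDiffOn ℝ ⊤ u (closure V) ∧ ∃ M : ℝ, rouBound ρ V u M

/-- membership in the class `H^{λ,ρ}_q(G)` -/
def memH (q : Fin n → ℝ) (lam ρ : ℝ) (G : Set (Euc n)) (h : Euc n → ℝ) : Prop :=
  memA1 q lam h ∧ memRou ρ G h

/-- the norm of `H^{λ,ρ}_q(G)` -/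
def hNorm (q : Fin n → ℝ) (lam ρ : ℝ) (G : Set (Euc n)) (h : Euc n → ℝ) : ℝ :=
  a1Norm q lam h + rouNorm ρ G h

/-- membership in the periodic Roumieu class `C⁰_{q,ω,ρ}(cl S[V])` -/
def memRouPer (q : Fin n → ℝ) (ρ : ℝ) (V : Set (Euc n)) (u : Euc n → ℝ) : Prop :=
  qPerOn q (closure (Sper q V)) u ∧ ContDiffOn ℝ ⊤ u (closure (Sper q V)) ∧
    ∃ M : ℝ, rouBound ρ (Sper q V) u M

/-- membership in the periodic Roumieu class `C⁰_{q,ω,ρ}(cl S[V]⁻)` -/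
def memRouPerM (q : Fin n → ℝ) (ρ : ℝ) (V : Set (Euc n)) (u : Euc n → ℝ) : Prop :=
  qPerOn q (closure (SperM q V)) u ∧ ContDiffOn ℝ ⊤ u (closure (SperM q V)) ∧
    ∃ M : ℝ, rouBound ρ (SperM q V) u M

/-- Gauss–Green data `(σ, ν)` for a (Lipschitz) bounded open set `Ω`: `σ` is the
surface measure on `∂Ω` and `ν` the a.e. defined outward unit normal, linked by the
divergence theorem. -/
def GaussGreen (Ω : Set (Euc n)) (σ : Measure (Euc n)) (ν : Euc n → Euc n) : Prop :=
  (∀ᵐ y ∂σ, y ∈ frontier Ω ∧ ‖ν y‖ = 1) ∧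
    ∀ F : Euc n → ℝ, ContDiffOn ℝ 1 F (closure Ω) →
      ∀ j : Fin n, (∫ y in Ω, pd j F y) = ∫ y, F y * ν y j ∂σ

/-- integral over the face `{y ∈ ∂Q : y j = c}` of the cell. -/
def faceIntegral (q : Fin n → ℝ) (j : Fin n) (c : ℝ) (F : Euc n → ℝ) : ℝ :=
  ∫ z : {i : Fin n // i ≠ j} → ℝ in Set.univ.pi (fun i => Set.Ioo 0 (q i.1)),
    F (show Euc n from WithLp.toLp 2 (fun i => if hij : i = j then c else z ⟨i, hij⟩))

/-- `∫_{∂Q} F (ν_Q)_j dσ`, written concretely as the difference of two face integrals. -/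
def bdryQIntegral (q : Fin n → ℝ) (j : Fin n) (F : Euc n → ℝ) : ℝ :=
  faceIntegral q j (q j) F - faceIntegral q j 0 F

lemma isOpen_cellQ (q : Fin n → ℝ) : IsOpen (cellQ q) := by
  have : cellQ q = ⋂ i : Fin n, (fun y : Euc n => y i) ⁻¹' Ioo 0 (q i) := by
    ext y; simp [cellQ]
  rw [this]
  exact isOpen_iInter_of_finite fun i => isOpen_Ioo.preimage (by fun_prop)

lemma IsCompact.exists_forall_apply_mem_Icc {q : Fin n → ℝ} {K : Set (Euc n)}
    (hK : IsCompact K) (hKQ : K ⊆ cellQ q) :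
    ∃ δ > 0, ∀ u ∈ K, ∀ j, u j ∈ Icc δ (q j - δ) := by
  obtain ⟨ε, hε, hthick⟩ := hK.exists_thickening_subset_open (isOpen_cellQ q) hKQ
  refine ⟨ε / 2, by positivity, fun u hu j => ?_⟩
  have hshift : ∀ t : ℝ, |t| < ε → u j + t ∈ Ioo 0 (q j) := by
    intro t ht
    have hmem : u + EuclideanSpace.single j t ∈ cellQ q := by
      refine hthick (Metric.ball_subset_thickening hu ε ?_)
      simpa [dist_eq_norm] using ht
    simpa using hmem j
  have hup := hshift (ε / 2) (by rw [abs_of_pos (by positivity)]; linarith)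
  have hdown := hshift (-(ε / 2)) (by rw [abs_neg, abs_of_pos (by positivity)]; linarith)
  exact ⟨by linarith [hdown.1], by linarith [hup.2]⟩

lemma le_abs_apply_of_mem_Sper {q : Fin n → ℝ} {Ω : Set (Euc n)} {j : Fin n} {δ : ℝ}
    (hqj : 0 < q j) (hΩ : ∀ u ∈ Ω, u j ∈ Icc δ (q j - δ)) {w : Euc n} (hw : w ∈ Sper q Ω) :
    δ ≤ |w j| := by
  obtain ⟨z, u, hu, rfl⟩ := mem_iUnion.mp hw
  obtain ⟨hlow, hhigh⟩ := hΩ u hu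
  simp only [vadd_eq_add, PiLp.add_apply]
  rcases le_or_gt 0 (z j) with hz | hz
  · have : (0 : ℝ) ≤ q j * z j := mul_nonneg hqj.le (by exact_mod_cast hz)
    exact le_abs.mpr (Or.inl (by linarith))
  · have hz' : (z j : ℝ) ≤ -1 := by exact_mod_cast (show z j ≤ -1 by omega)
    have : q j * z j ≤ -q j := by nlinarith
    exact le_abs.mpr (Or.inr (by linarith))

lemma mem_SperM_of_apply_eq_zero {q : Fin n → ℝ} (hq : ∀ i, 0 < q i) {Ω : Set (Euc n)}
    (hΩb : Bornology.IsBounded Ω) (hΩQ : closure Ω ⊆ cellQ q) {j : Fin n} {y : Euc n}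
    (hy : y j = 0) : y ∈ SperM q Ω := by
  obtain ⟨δ, hδ, hcell⟩ := hΩb.isCompact_closure.exists_forall_apply_mem_Icc hΩQ
  intro hyS
  obtain ⟨w, hwS, hyw⟩ := Metric.mem_closure_iff.mp hyS δ hδ
  have hwj : δ ≤ |w j| :=
    le_abs_apply_of_mem_Sper (hq j) (fun u hu => hcell u (subset_closure hu) j) hwS
  have : |w j| ≤ dist y w := by
    simpa [hy, Real.dist_eq] using PiLp.dist_apply_le y w j
  linarith

def faceEmb (j : Fin n) (c : ℝ) (z : {i : Fin n // i ≠ j} → ℝ) : Euc n :=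
  WithLp.toLp 2 fun i => if hij : i = j then c else z ⟨i, hij⟩

lemma faceEmb_add_single (j : Fin n) (c d : ℝ) (z : {i : Fin n // i ≠ j} → ℝ) :
    faceEmb j (c + d) z = faceEmb j c z + EuclideanSpace.single j d := by
  ext i
  by_cases hij : i = j
  · subst hij; simp [faceEmb]
  · simp [faceEmb, hij]

lemma bdryQIntegral_eq_zero_of_ae_eq {q : Fin n → ℝ} {j : Fin n} {F : Euc n → ℝ}
    (hF : ∀ᵐ z, F (faceEmb j (q j) z) = F (faceEmb j 0 z)) : bdryQIntegral q j F = 0 :=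
  sub_eq_zero.mpr (integral_congr_ae (ae_restrict_of_ae hF))

/-- The exceptional `z` have `i`-th coordinate in the countable set `x i - q i ℤ`. -/
lemma ae_sub_faceEmb_notMem_qLat (q : Fin n → ℝ) {i j : Fin n} (hij : i ≠ j) (x : Euc n)
    (c : ℝ) : ∀ᵐ z, x - faceEmb j c z ∉ qLat q := by
  have hcoord : ∀ᵐ z : {i : Fin n // i ≠ j} → ℝ, ∀ m : ℤ, z ⟨i, hij⟩ ≠ x i - q i * m :=
    ae_all_iff.mpr fun m => Measure.ae_eval_ne _ _ _
  filter_upwards [hcoord] with z hz ⟨m, hm⟩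
  refine hz (m i) ?_
  have := hm i
  simp only [PiLp.sub_apply, faceEmb, dif_neg hij] at this
  linarith

theorem stmt14_general (n : ℕ) (hn : 2 ≤ n) (q : Fin n → ℝ) (hq : ∀ i, 0 < q i)
    (lam : ℝ)
    (Ω : Set (Euc n)) (hΩb : Bornology.IsBounded Ω)
    (hΩQ : closure Ω ⊆ cellQ q)
    (h : Euc n → ℝ) (hh : memA1 q lam h)
    (φ : Euc n → ℝ) (hφper : qPerOn q (closure (SperM q Ω)) φ) :
    ∀ x : Euc n, ∀ j : Fin n,
      bdryQIntegral q j (fun y => h (x - y) * φ y) = 0 := by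
  intro x j
  obtain ⟨i, hij⟩ : ∃ i : Fin n, i ≠ j :=
    haveI := Fin.nontrivial_iff_two_le.mpr hn
    exists_ne j
  refine bdryQIntegral_eq_zero_of_ae_eq ?_
  filter_upwards [ae_sub_faceEmb_notMem_qLat q hij x (q j)] with z hz
  have hshift : faceEmb j (q j) z = faceEmb j 0 z + EuclideanSpace.single j (q j) := by
    simpa using faceEmb_add_single j 0 (q j) z
  have hface : faceEmb j 0 z ∈ closure (SperM q Ω) :=
    subset_closure (mem_SperM_of_apply_eq_zero hq hΩb hΩQ (j := j) (by simp [faceEmb]))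
  have hh_per : h (x - faceEmb j 0 z) = h (x - faceEmb j (q j) z) := by
    rw [← hh.2.1.2.1 _ hz j, hshift, sub_add_eq_sub_sub, sub_add_cancel]
  rw [hh_per, hshift, hφper _ hface j]

/-- Remark after Lemma 3.7. If `φ` is (the restriction to
`cl Q \ Ω` of) a `q`-periodic function of class `C¹` on `cl S[Ω]⁻`, then
`∫_{∂Q} h(x-y) φ(y) (ν_Q)ⱼ(y) dσ_y = 0` for all `x ∈ ℝⁿ` and all `j`; the boundary
integral on `∂Q` is written concretely as a difference of face integrals. -/
theorem stmt14 (n : ℕ) (hn : 2 ≤ n) (q : Fin n → ℝ) (hq : ∀ i, 0 < q i)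
    (lam : ℝ) (hl0 : 0 < lam) (hln : lam < (n : ℝ) - 1)
    (Ω : Set (Euc n)) (hΩo : IsOpen Ω) (hΩb : Bornology.IsBounded Ω)
    (hΩQ : closure Ω ⊆ cellQ q)
    (h : Euc n → ℝ) (hh : memA1 q lam h)
    (φ : Euc n → ℝ) (hφper : qPerOn q (closure (SperM q Ω)) φ)
    (hφ : ContDiffOn ℝ 1 φ (closure (SperM q Ω))) :
    ∀ x : Euc n, ∀ j : Fin n,
      bdryQIntegral q j (fun y => h (x - y) * φ y) = 0 :=
  stmt14_general n hn q hq lam Ω hΩb hΩQ h hh φ hφper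

end
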